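/- Let b: ℝⁿ → ℝ be twice continuously differentiable along trajectories of a system, and suppose along a trajectory b̈(t) + 2ḃ(t) + b(t) ≥ 0 for all t ≥ 0, with b(0) ≥ 0 and ḃ(0) + b(0) ≥ 0. Then b(t) ≥ 0 for all t ≥ 0. -/

import Mathlib

lemma aux_nonneg (f f' : ℝ → ℝ)
    (hf : ∀ t, HasDerivAt f (f' t) t)
    (hineq : ∀ t, 0 ≤ t → f' t + f t ≥ 0)
    (h0 : f 0 ≥ 0) : ∀ t, 0 ≤ t → f t ≥ 0 := by
  intro t ht
  set g : ℝ → ℝ := fun s => Real.exp s * f s with hg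
  have hgd : ∀ s, HasDerivAt g (Real.exp s * (f' s + f s)) s := by
    intro s
    have : HasDerivAt (fun y => Real.exp y * f y) (Real.exp s * f s + Real.exp s * f' s) s := (Real.hasDerivAt_exp s).mul (hf s)
    convert this using 1
    ring
  have hmono : MonotoneOn g (Set.Ici 0) := by
    apply monotoneOn_of_deriv_nonneg (convex_Ici 0)
    · exact (Real.continuous_exp.mul (continuous_iff_continuousAt.mpr fun s => (hf s).continuousAt)).continuousOn
    · intro s hs
      exact ((hgd s).differentiableAt).differentiableWithinAt
    · intro s hs
      rw [(hgd s).deriv]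
      have : (0:ℝ) ≤ s := le_of_lt (by simpa using hs)
      exact mul_nonneg (Real.exp_pos s).le (hineq s this)
  have h := hmono (Set.self_mem_Ici) (Set.mem_Ici.mpr ht) ht
  have hg0 : g 0 = f 0 := by simp [hg]
  have : 0 ≤ g t := by rw [hg0] at h; linarith [mul_nonneg (Real.exp_pos (0:ℝ)).le h0]
  have hep := (Real.exp_pos t)
  have hft : 0 ≤ Real.exp t * f t := by simpa [hg] using this
  nlinarith [hft, hep]


/-- Forward invariance for second-order barrier conditions with identity
class-K functions: if b̈ + 2ḃ + b ≥ 0 for t ≥ 0, b(0) ≥ 0 and ḃ(0) + b(0) ≥ 0,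
then b(t) ≥ 0 for all t ≥ 0. -/
theorem stmt_17 (b b' b'' : ℝ → ℝ)
    (hb : ∀ t, HasDerivAt b (b' t) t)
    (hb' : ∀ t, HasDerivAt b' (b'' t) t)
    (hcont : Continuous b'')
    (hcbf : ∀ t, 0 ≤ t → b'' t + 2 * b' t + b t ≥ 0)
    (h0 : b 0 ≥ 0) (h1 : b' 0 + b 0 ≥ 0) :
    ∀ t, 0 ≤ t → b t ≥ 0 := by
  have hpsi : ∀ t, 0 ≤ t → b' t + b t ≥ 0 := by
    apply aux_nonneg (fun t => b' t + b t) (fun t => b'' t + b' t)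
    · intro t; exact (hb' t).add (hb t)
    · intro t ht; have := hcbf t ht; show b'' t + b' t + (b' t + b t) ≥ 0; linarith
    · exact h1
  exact aux_nonneg b b' hb hpsi h0
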